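/- arXiv:2604.02316 — 5 statements merged into one kernel-verified Lean document; each statement's English description precedes it below -/
import Mathlib

section
/- For n ≥ 4, the subgroup L = Sym({3,...,n}) ≤ S_n acts regularly (by conjugation) on each set O_k = {α an n-cycle in S_n : 1^(α^k) = 2}, for 1 ≤ k ≤ n-1. -/
/-- For `n ≥ 4`, the subgroup `L = Sym({3,...,n}) ≤ S_n` (the permutations fixing the
points `1` and `2`, modelled as `0, 1 : Fin n`) acts regularly by conjugation on each set
`O_k = {α an n-cycle : α^k maps 1 to 2}`, for `1 ≤ k ≤ n-1`: for any `α, β ∈ O_k` there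
is a unique `π ∈ L` with `α^π = π α π⁻¹ = β` (conjugation relabelling the cycle entries). -/
theorem L_regular_on_O (n k : ℕ) [NeZero n] (hn : 4 ≤ n) (hk1 : 1 ≤ k) (hk2 : k ≤ n - 1)
    (α β : Equiv.Perm (Fin n))
    (hα : α.IsCycle ∧ α.support = Finset.univ ∧ (α ^ k) 0 = 1)
    (hβ : β.IsCycle ∧ β.support = Finset.univ ∧ (β ^ k) 0 = 1) :
    ∃! π : Equiv.Perm (Fin n), (π 0 = 0 ∧ π 1 = 1) ∧ π * α * π⁻¹ = β := by
  obtain ⟨hαc, hαs, hαk⟩ := hα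
  obtain ⟨hβc, hβs, hβk⟩ := hβ
  -- key computation: any conjugator sends α-orbit of 0 to β-orbit of π 0
  have keyfun : ∀ π : Equiv.Perm (Fin n), π * α * π⁻¹ = β →
      ∀ j : ℕ, π ((α ^ j) 0) = (β ^ j) (π 0) := by
    intro π hπ j
    have h : π * α ^ j * π⁻¹ = β ^ j := by rw [← hπ, conj_pow]
    have h2 : π * α ^ j = β ^ j * π := by
      rw [← h]; group
    calc π ((α ^ j) 0) = (π * α ^ j) 0 := rfl
      _ = (β ^ j * π) 0 := by rw [h2]
      _ = (β ^ j) (π 0) := rfl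
  have hβ0 : ∀ x : Fin n, β x ≠ x := fun x =>
    Equiv.Perm.mem_support.mp (by rw [hβs]; exact Finset.mem_univ x)
  have hα0 : ∀ x : Fin n, α x ≠ x := fun x =>
    Equiv.Perm.mem_support.mp (by rw [hαs]; exact Finset.mem_univ x)
  have hconj : IsConj α β := hαc.isConj hβc (by rw [hαs, hβs])
  obtain ⟨σ, hσ⟩ := isConj_iff.mp hconj
  obtain ⟨m, hm⟩ := hβc.exists_pow_eq (hβ0 (σ 0)) (hβ0 0)
  set π : Equiv.Perm (Fin n) := β ^ m * σ with hπdef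
  have hπc : π * α * π⁻¹ = β := by
    have : π * α * π⁻¹ = β ^ m * (σ * α * σ⁻¹) * (β ^ m)⁻¹ := by rw [hπdef]; group
    rw [this, hσ]; group
  have hπ0 : π 0 = 0 := hm
  have hπ1 : π 1 = 1 := by
    have := keyfun π hπc k
    rw [hαk, hπ0, hβk] at this
    exact this
  refine ⟨π, ⟨⟨hπ0, hπ1⟩, hπc⟩, ?_⟩
  rintro γ ⟨⟨hγ0, -⟩, hγc⟩
  apply Equiv.ext; intro x
  obtain ⟨j, hj⟩ := hαc.exists_pow_eq (hα0 0) (hα0 x)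
  calc γ x = γ ((α ^ j) 0) := by rw [hj]
    _ = (β ^ j) (γ 0) := keyfun γ hγc j
    _ = (β ^ j) (π 0) := by rw [hγ0, hπ0]
    _ = π ((α ^ j) 0) := (keyfun π hπc j).symm
    _ = π x := by rw [hj]
end

section
/- For n ≥ 4 and 1 ≤ k ≤ n-1, conjugation by the transposition δ = (1 2) maps the set O_k of n-cycles bijectively onto O_{n-k}. -/
open Equiv

lemma aux_mapsTo (n m : ℕ) [NeZero n] (hn : 4 ≤ n) (hm2 : m ≤ n)
    (α : Equiv.Perm (Fin n)) (h : α.IsCycle ∧ α.support = Finset.univ ∧ (α ^ m) 0 = 1) :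
    ((Equiv.swap (0:Fin n) 1)⁻¹ * α * Equiv.swap (0:Fin n) 1).IsCycle ∧
    ((Equiv.swap (0:Fin n) 1)⁻¹ * α * Equiv.swap (0:Fin n) 1).support = Finset.univ ∧
    (((Equiv.swap (0:Fin n) 1)⁻¹ * α * Equiv.swap (0:Fin n) 1) ^ (n - m)) 0 = 1 := by
  obtain ⟨hc, hs, hm⟩ := h
  have hinv : (Equiv.swap (0:Fin n) 1)⁻¹ = Equiv.swap (0:Fin n) 1 := by simp
  have hrw : (Equiv.swap (0:Fin n) 1)⁻¹ * α * Equiv.swap (0:Fin n) 1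
      = Equiv.swap (0:Fin n) 1 * α * (Equiv.swap (0:Fin n) 1)⁻¹ := by
    rw [hinv]
  have horder : α ^ n = 1 := by
    have h1 := hc.orderOf
    rw [hs, Finset.card_univ, Fintype.card_fin] at h1
    have := pow_orderOf_eq_one α; rwa [h1] at this
  have hαnm : (α ^ (n - m)) 1 = 0 := by
    have : α ^ (n - m) * α ^ m = 1 := by
      rw [← pow_add, Nat.sub_add_cancel hm2, horder]
    have h2 := congrArg (fun σ : Equiv.Perm (Fin n) => σ 0) this
    simpa [hm] using h2
  refine ⟨?_, ?_, ?_⟩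
  · rw [hrw]; exact hc.conj
  · rw [hrw, Equiv.Perm.support_conj, hs]
    ext x; simp
  · rw [hrw, conj_pow]
    simp [hαnm]

/-- For `n ≥ 4` and `1 ≤ k ≤ n-1`, conjugation by the transposition `δ = (1 2)`
maps the set `O_k` of `n`-cycles bijectively onto `O_{n-k}`.
Here points `1, 2` of `{1,...,n}` are modelled as `0, 1 : Fin n`,
`O_k = {α an n-cycle : α^k maps 1 to 2}`, and `α^δ = δ⁻¹ α δ`
(which here equals `δ α δ⁻¹` since `δ` is an involution). -/
theorem conj_swap_bijOn_O (n k : ℕ) [NeZero n] (hn : 4 ≤ n) (hk1 : 1 ≤ k) (hk2 : k ≤ n - 1) :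
    Set.BijOn
      (fun α : Equiv.Perm (Fin n) =>
        (Equiv.swap (0 : Fin n) 1)⁻¹ * α * Equiv.swap (0 : Fin n) 1)
      {α : Equiv.Perm (Fin n) | α.IsCycle ∧ α.support = Finset.univ ∧ (α ^ k) 0 = 1}
      {α : Equiv.Perm (Fin n) | α.IsCycle ∧ α.support = Finset.univ ∧ (α ^ (n - k)) 0 = 1} := by
  have hkn : k ≤ n := le_trans hk2 (Nat.sub_le n 1)
  have hnkn : n - k ≤ n := Nat.sub_le n k
  have hkey : n - (n - k) = k := Nat.sub_sub_self hkn
  refine ⟨fun α hα => aux_mapsTo n k hn hkn α hα, ?_, ?_⟩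
  · intro a _ b _ hab
    simpa using hab
  · intro β hβ
    refine ⟨(Equiv.swap (0:Fin n) 1)⁻¹ * β * Equiv.swap (0:Fin n) 1, ?_, ?_⟩
    · have := aux_mapsTo n (n - k) hn hnkn β hβ
      rwa [hkey] at this
    · simp [mul_assoc]
end

section
/- Let n ≥ 4, G = S_n, F = Fun(A, T) the group of functions from the set A of n-cycles of S_n to a nonabelian simple group T = ⟨x,y⟩ with |x| = 2 and |y| an odd prime. Define f ∈ F by f(α) = y for α ∈ O_1, f(α) = y⁻¹ for α ∈ O_{n-1}, f(α) = x for α ∈ O_2 ∪ O_{n-2}, and f(α) = 1 otherwise. Then the element g = f·(1 2) of the semidirect product X = F : G satisfies g² = 1. -/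
/-- The set `A` of all `n`-cycles in `S_n`, as a subtype of `Equiv.Perm (Fin n)`. -/
abbrev NCycle (n : ℕ) :=
  {α : Equiv.Perm (Fin n) // α.IsCycle ∧ α.support = Finset.univ}

/-- Conjugation by `σ ∈ S_n` as a permutation of the set of `n`-cycles. -/
def conjNCycle (n : ℕ) (σ : Equiv.Perm (Fin n)) : Equiv.Perm (NCycle n) where
  toFun α := ⟨σ * α.1 * σ⁻¹, α.2.1.conj, by
    rw [Equiv.Perm.support_conj, α.2.2, Finset.map_univ_equiv]⟩
  invFun α := ⟨σ⁻¹ * α.1 * σ, by simpa using α.2.1.conj (g := σ⁻¹), by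
    have := Equiv.Perm.support_conj (σ := σ⁻¹) (τ := α.1)
    rw [inv_inv] at this
    rw [this, α.2.2, Finset.map_univ_equiv]⟩
  left_inv α := by ext1; simp [mul_assoc]
  right_inv α := by ext1; simp [mul_assoc]

/-- The action of `S_n` on `Fun(A, T)`, the group of functions from the set `A` of
`n`-cycles to `T`, given by `(σ • f) (α) = f (α^{σ⁻¹}) = f (σ⁻¹ α σ)`.  This is the
action defining the wreath product `T wr_A S_n = Fun(A,T) : S_n`. -/
def cycleFunAut (n : ℕ) (T : Type*) [Group T] :
    Equiv.Perm (Fin n) →* MulAut (NCycle n → T) where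
  toFun σ :=
    { toFun := fun f => f ∘ conjNCycle n σ⁻¹
      invFun := fun f => f ∘ conjNCycle n σ
      left_inv := fun f => by
        funext α; simp only [Function.comp_apply]
        congr 1; ext1; simp [conjNCycle, mul_assoc]
      right_inv := fun f => by
        funext α; simp only [Function.comp_apply]
        congr 1; ext1; simp [conjNCycle, mul_assoc]
      map_mul' := fun f g => rfl }
  map_one' := by
    apply MulEquiv.ext; intro f; funext α
    show f (conjNCycle n 1⁻¹ α) = f α
    have h : conjNCycle n 1⁻¹ α = α := by ext1; simp [conjNCycle]
    rw [h]
  map_mul' := fun σ τ => by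
    apply MulEquiv.ext; intro f; funext α
    show f (conjNCycle n (σ * τ)⁻¹ α) = f (conjNCycle n τ⁻¹ (conjNCycle n σ⁻¹ α))
    have h : conjNCycle n (σ * τ)⁻¹ α = conjNCycle n τ⁻¹ (conjNCycle n σ⁻¹ α) := by
      ext1; simp [conjNCycle, mul_assoc]
    rw [h]

/-- The wreath product `X = Fun(A,T) : S_n = T wr_A S_n`. -/
abbrev WreathCyc (n : ℕ) (T : Type*) [Group T] :=
  SemidirectProduct (NCycle n → T) (Equiv.Perm (Fin n)) (cycleFunAut n T)

/-- The function `f ∈ Fun(A,T)` of the construction: `f` takes the value `y` on `O_1`,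
`y⁻¹` on `O_{n-1}`, `x` on `O_2 ∪ O_{n-2}`, and `1` elsewhere, where
`O_k = {α ∈ A : α^k maps 1 to 2}` (points `1,2` modelled as `0,1 : Fin n`). -/
def constructionF (n : ℕ) [NeZero n] {T : Type*} [Group T] (x y : T) : NCycle n → T :=
  fun α =>
    if (α.1 ^ 1) 0 = 1 then y
    else if (α.1 ^ (n - 1)) 0 = 1 then y⁻¹
    else if (α.1 ^ 2) 0 = 1 ∨ (α.1 ^ (n - 2)) 0 = 1 then x
    else 1

/-- The element `g = f · (1 2)` of `X = Fun(A,T) : S_n`. -/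
def constructionG (n : ℕ) [NeZero n] {T : Type*} [Group T] (x y : T) : WreathCyc n T :=
  SemidirectProduct.inl (constructionF n x y) *
    SemidirectProduct.inr (Equiv.swap (0 : Fin n) 1)

/-- Let `n ≥ 4`, `G = S_n`, `F = Fun(A,T)` the group of functions from the set `A` of
`n`-cycles of `S_n` to a nonabelian simple group `T = ⟨x,y⟩` with `|x| = 2` and `|y|` an
odd prime.  With `f` as in the construction (value `y` on `O_1`, `y⁻¹` on `O_{n-1}`,
`x` on `O_2 ∪ O_{n-2}`, `1` otherwise), the element `g = f·(1 2)` of the semidirect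
product `X = F : G` satisfies `g² = 1`. -/
theorem constructionG_sq_eq_one (n : ℕ) [NeZero n] (hn : 4 ≤ n)
    {T : Type*} [Group T] [IsSimpleGroup T] (hnab : ∃ a b : T, a * b ≠ b * a)
    (x y : T) (hx : orderOf x = 2) (hyp : (orderOf y).Prime) (hyodd : Odd (orderOf y))
    (hgen : Subgroup.closure ({x, y} : Set T) = ⊤) :
    (constructionG n x y) ^ 2 = 1 := by
    -- key lemma: an n-cycle power with exponent strictly between 0 and n fixes no point
  have hfix : ∀ (α : NCycle n) (p : Fin n) (k : ℕ), 0 < k → k < n → (α.1 ^ k) p ≠ p := by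
    intro α p k hk hk' h
    have hp : α.1 p ≠ p := by
      have : p ∈ α.1.support := by rw [α.2.2]; exact Finset.mem_univ p
      exact Equiv.Perm.mem_support.1 this
    have h1 : α.1 ^ k = 1 := (α.2.1.pow_eq_one_iff' hp).2 h
    have h2 : orderOf α.1 = n := by
      rw [α.2.1.orderOf, α.2.2, Finset.card_univ, Fintype.card_fin]
    have := orderOf_dvd_of_pow_eq_one h1
    rw [h2] at this
    exact absurd (Nat.le_of_dvd hk this) (not_le.2 hk')
  have hpow_n : ∀ (α : NCycle n), α.1 ^ n = 1 := by
    intro α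
    have h2 : orderOf α.1 = n := by
      rw [α.2.1.orderOf, α.2.2, Finset.card_univ, Fintype.card_fin]
    have := pow_orderOf_eq_one α.1
    rwa [h2] at this
  set s : Equiv.Perm (Fin n) := Equiv.swap (0 : Fin n) 1 with hs
  -- the conjugated cycle
  have hconj : ∀ (α : NCycle n) (k : ℕ),
      (((conjNCycle n s⁻¹ α).1) ^ k) 0 = s ((α.1 ^ k) 1) := by
    intro α k
    show ((s⁻¹ * α.1 * s) ^ k) 0 = s ((α.1 ^ k) 1)
    have h : (s⁻¹ * α.1 * s) ^ k = s⁻¹ * α.1 ^ k * s := by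
      have := conj_pow (i := k) (a := s⁻¹) (b := α.1)
      simpa using this
    rw [h]
    have hsinv : s⁻¹ = s := by rw [hs, Equiv.swap_inv]
    rw [hsinv]
    simp [Equiv.Perm.mul_apply, hs, Equiv.swap_apply_left]
  -- transfer: (β^k) 0 = 1 ↔ (α^(n-k)) 0 = 1, for 0 < k < n
  have htrans : ∀ (α : NCycle n) (k : ℕ), 0 < k → k < n →
      ((((conjNCycle n s⁻¹ α).1) ^ k) 0 = 1 ↔ (α.1 ^ (n - k)) 0 = 1) := by
    intro α k hk hk'
    rw [hconj]
    have hs1 : s 0 = 1 := Equiv.swap_apply_left 0 1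
    constructor
    · intro h
      have h0 : (α.1 ^ k) 1 = 0 := by
        have := s.injective (h.trans hs1.symm)
        exact this
      have : (α.1 ^ (n - k)) ((α.1 ^ k) 1) = (α.1 ^ n) 1 := by
        rw [← Equiv.Perm.mul_apply, ← pow_add, Nat.sub_add_cancel (le_of_lt hk')]
      rw [h0, hpow_n] at this
      simpa using this
    · intro h
      have h0 : (α.1 ^ k) 1 = 0 := by
        have : (α.1 ^ k) ((α.1 ^ (n - k)) 0) = (α.1 ^ n) 0 := by
          rw [← Equiv.Perm.mul_apply, ← pow_add, Nat.add_sub_cancel' (le_of_lt hk')]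
        rw [h, hpow_n] at this
        simpa using this
      rw [h0, hs1]
  -- compute g^2
  unfold constructionG
  rw [sq]
  apply SemidirectProduct.ext
  · simp only [SemidirectProduct.mul_left, SemidirectProduct.mul_right,
      SemidirectProduct.left_inl, SemidirectProduct.right_inl, SemidirectProduct.left_inr,
      SemidirectProduct.right_inr, SemidirectProduct.one_left, map_one, mul_one, one_mul]
    funext α
    show constructionF n x y α * constructionF n x y (conjNCycle n s⁻¹ α) = 1
    set β := conjNCycle n s⁻¹ α with hβ'
    -- facts about n
    have hn1 : 0 < n - 1 := by omega
    have hn1' : n - 1 < n := by omega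
    have hn2 : 0 < n - 2 := by omega
    have hn2' : n - 2 < n := by omega
    have e1 : (β.1 ^ 1) 0 = 1 ↔ (α.1 ^ (n - 1)) 0 = 1 := htrans α 1 one_pos (by omega)
    have e2 : (β.1 ^ 2) 0 = 1 ↔ (α.1 ^ (n - 2)) 0 = 1 := htrans α 2 two_pos (by omega)
    have e3 : (β.1 ^ (n - 1)) 0 = 1 ↔ (α.1 ^ 1) 0 = 1 := by
      rw [hβ', htrans α (n - 1) hn1 hn1', Nat.sub_sub_self (by omega : 1 ≤ n)]
    have e4 : (β.1 ^ (n - 2)) 0 = 1 ↔ (α.1 ^ 2) 0 = 1 := by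
      rw [hβ', htrans α (n - 2) hn2 hn2', Nat.sub_sub_self (by omega : 2 ≤ n)]
    -- disjointness: α can't be in both O_1 and O_{n-1}
    have hd : ¬ ((α.1 ^ 1) 0 = 1 ∧ (α.1 ^ (n - 1)) 0 = 1) := by
      rintro ⟨ha, hb⟩
      have h : (α.1 ^ (n - 1)) 0 = (α.1 ^ (n - 2)) ((α.1 ^ 1) 0) := by
        rw [← Equiv.Perm.mul_apply, ← pow_add]
        congr 2
        omega
      rw [ha, hb] at h
      exact hfix α 1 (n - 2) hn2 hn2' h.symm
    unfold constructionF
    by_cases h1 : (α.1 ^ 1) 0 = 1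
    · have hb1 : ¬ (β.1 ^ 1) 0 = 1 := fun h => hd ⟨h1, e1.1 h⟩
      have hb2 : (β.1 ^ (n - 1)) 0 = 1 := e3.2 h1
      rw [if_pos h1, if_neg hb1, if_pos hb2, mul_inv_cancel]
    · by_cases h2 : (α.1 ^ (n - 1)) 0 = 1
      · have hb1 : (β.1 ^ 1) 0 = 1 := e1.2 h2
        rw [if_neg h1, if_pos h2, if_pos hb1, inv_mul_cancel]
      · have hb1 : ¬ (β.1 ^ 1) 0 = 1 := fun h => h2 (e1.1 h)
        have hb2 : ¬ (β.1 ^ (n - 1)) 0 = 1 := fun h => h1 (e3.1 h)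
        by_cases h3 : (α.1 ^ 2) 0 = 1 ∨ (α.1 ^ (n - 2)) 0 = 1
        · have hb3 : (β.1 ^ 2) 0 = 1 ∨ (β.1 ^ (n - 2)) 0 = 1 := by
            rcases h3 with h | h
            · exact Or.inr (e4.2 h)
            · exact Or.inl (e2.2 h)
          rw [if_neg h1, if_neg h2, if_pos h3, if_neg hb1, if_neg hb2, if_pos hb3]
          have := pow_orderOf_eq_one x
          rwa [hx, sq] at this
        · have hb3 : ¬ ((β.1 ^ 2) 0 = 1 ∨ (β.1 ^ (n - 2)) 0 = 1) := by
            rintro (h | h)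
            · exact h3 (Or.inr (e2.1 h))
            · exact h3 (Or.inl (e4.1 h))
          rw [if_neg h1, if_neg h2, if_neg h3, if_neg hb1, if_neg hb2, if_neg hb3, mul_one]
  · simp only [SemidirectProduct.mul_right, SemidirectProduct.right_inl,
      SemidirectProduct.right_inr, SemidirectProduct.one_right, one_mul]
    exact Equiv.swap_mul_self 0 1
end

section
/- With H = Sym({2,...,n}) ≤ S_n, L = Sym({3,...,n}), and g = f·(1 2) as in the construction (n ≥ 4), one has H ∩ H^g = L, where H and H^g are viewed as subgroups of X = Fun(A,T) : S_n. -/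
lemma f_invariant (n : ℕ) [NeZero n] {T : Type*} [Group T] (x y : T)
    (τ : Equiv.Perm (Fin n)) (h0 : τ 0 = 0) (h1 : τ 1 = 1) :
    cycleFunAut n T τ (constructionF n x y) = constructionF n x y := by
  funext α
  show constructionF n x y (conjNCycle n τ⁻¹ α) = constructionF n x y α
  have key : ∀ k, (((conjNCycle n τ⁻¹ α).1 ^ k) 0 = 1) ↔ ((α.1 ^ k) 0 = 1) := by
    intro k
    have h2 : (conjNCycle n τ⁻¹ α).1 = τ⁻¹ * α.1 * τ := by simp [conjNCycle]
    have hpow : (τ⁻¹ * α.1 * τ) ^ k = τ⁻¹ * α.1 ^ k * τ := by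
      induction k with
      | zero => simp
      | succ k ih => rw [pow_succ, pow_succ, ih]; simp [mul_assoc]
    rw [h2, hpow]
    simp only [Equiv.Perm.mul_apply, h0]
    rw [show (τ⁻¹ : Equiv.Perm (Fin n)) ((α.1 ^ k) 0) = τ.symm ((α.1 ^ k) 0) from rfl,
      Equiv.symm_apply_eq, h1]
  simp only [constructionF, key]

/-- With `H = Sym({2,...,n}) ≤ S_n` the stabilizer of the point `1` (modelled as
`0 : Fin n`), `L = Sym({3,...,n})` the pointwise stabilizer of `1` and `2` (i.e. of
`0, 1 : Fin n`), and `g = f·(1 2)` as in the construction, one has `H ∩ H^g = L`,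
where `H, H^g = g⁻¹Hg` and `L` are viewed as subgroups of `X = Fun(A,T) : S_n`
(via the embedding `inr : S_n → X`). -/
theorem H_inter_Hg_eq_L (n : ℕ) [NeZero n] (hn : 4 ≤ n)
    {T : Type*} [Group T] [IsSimpleGroup T] (hnab : ∃ a b : T, a * b ≠ b * a)
    (x y : T) (hx : orderOf x = 2) (hyp : (orderOf y).Prime) (hyodd : Odd (orderOf y))
    (hgen : Subgroup.closure ({x, y} : Set T) = ⊤) :
    (Subgroup.map (SemidirectProduct.inr : Equiv.Perm (Fin n) →* WreathCyc n T)
        (MulAction.stabilizer (Equiv.Perm (Fin n)) (0 : Fin n))) ⊓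
      (Subgroup.map (MulAut.conj (constructionG n x y)⁻¹).toMonoidHom
        (Subgroup.map (SemidirectProduct.inr : Equiv.Perm (Fin n) →* WreathCyc n T)
          (MulAction.stabilizer (Equiv.Perm (Fin n)) (0 : Fin n)))) =
    Subgroup.map (SemidirectProduct.inr : Equiv.Perm (Fin n) →* WreathCyc n T)
      (MulAction.stabilizer (Equiv.Perm (Fin n)) (0 : Fin n) ⊓
        MulAction.stabilizer (Equiv.Perm (Fin n)) (1 : Fin n)) := by
  ext z
  simp only [Subgroup.mem_inf, Subgroup.mem_map, MulAction.mem_stabilizer_iff,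
    Equiv.Perm.smul_def]
  set s : Equiv.Perm (Fin n) := Equiv.swap (0 : Fin n) 1 with hs
  set g := constructionG n x y with hg
  have hsinv : s⁻¹ = s := by rw [hs, Equiv.swap_inv]
  have hgr : g.right = s := by rw [hg]; rfl
  constructor
  · rintro ⟨⟨σ, hσ0, rfl⟩, w, ⟨τ, hτ0, rfl⟩, hz'⟩
    refine ⟨σ, ⟨hσ0, ?_⟩, rfl⟩
    have hs0 : s 0 = 1 := Equiv.swap_apply_left 0 1
    have hs1 : s 1 = 0 := Equiv.swap_apply_right 0 1
    have h2 := congrArg SemidirectProduct.right hz'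
    simp only [MulEquiv.toMonoidHom_eq_coe, MonoidHom.coe_coe, MulAut.conj_apply, inv_inv,
      SemidirectProduct.mul_right, SemidirectProduct.inv_right, SemidirectProduct.right_inr,
      hgr] at h2
    have h3 : σ 1 = (s⁻¹ * τ * s) 1 := by rw [h2]
    rw [h3, hsinv]
    simp only [Equiv.Perm.mul_apply, hs1, hτ0, hs0]
  · rintro ⟨σ, ⟨hσ0, hσ1⟩, rfl⟩
    set f := constructionF n x y with hf
    set τ : Equiv.Perm (Fin n) := s * σ * s with hτ
    have hs0 : s 0 = 1 := Equiv.swap_apply_left 0 1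
    have hs1 : s 1 = 0 := Equiv.swap_apply_right 0 1
    have hτ0 : τ (0 : Fin n) = 0 := by
      simp only [hτ, Equiv.Perm.mul_apply, hs0, hσ1, hs1]
    have hτ1 : τ (1 : Fin n) = 1 := by
      simp only [hτ, Equiv.Perm.mul_apply, hs1, hσ0, hs0]
    refine ⟨⟨σ, hσ0, rfl⟩, SemidirectProduct.inr τ, ⟨τ, hτ0, rfl⟩, ?_⟩
    have hfi := f_invariant n x y τ hτ0 hτ1
    have hss : s * s = 1 := by nth_rewrite 2 [← hsinv]; exact mul_inv_cancel s
    have hcomm : SemidirectProduct.inr τ * SemidirectProduct.inl f =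
        (SemidirectProduct.inl f : WreathCyc n T) * SemidirectProduct.inr τ := by
      have h5 := SemidirectProduct.inl_aut (φ := cycleFunAut n T) τ f
      rw [hfi] at h5
      conv_rhs => rw [h5]
      rw [mul_assoc, mul_assoc, ← map_mul SemidirectProduct.inr τ⁻¹ τ, inv_mul_cancel,
        map_one, mul_one]
    have key : g * SemidirectProduct.inr σ * g⁻¹ = SemidirectProduct.inr τ := by
      rw [mul_inv_eq_iff_eq_mul, hg]
      show SemidirectProduct.inl f * SemidirectProduct.inr s * SemidirectProduct.inr σ =
        SemidirectProduct.inr τ * (SemidirectProduct.inl f * SemidirectProduct.inr s)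
      calc SemidirectProduct.inl f * SemidirectProduct.inr s * SemidirectProduct.inr σ
          = SemidirectProduct.inl f * SemidirectProduct.inr (s * σ) := by
            rw [mul_assoc, map_mul SemidirectProduct.inr s σ]
        _ = SemidirectProduct.inl f * SemidirectProduct.inr (τ * s) := by
            rw [show τ * s = s * σ by rw [hτ, mul_assoc, hss, mul_one]]
        _ = SemidirectProduct.inl f * SemidirectProduct.inr τ * SemidirectProduct.inr s := by
            rw [map_mul SemidirectProduct.inr τ s, mul_assoc]
        _ = SemidirectProduct.inr τ * SemidirectProduct.inl f * SemidirectProduct.inr s := by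
            rw [hcomm]
        _ = SemidirectProduct.inr τ * (SemidirectProduct.inl f * SemidirectProduct.inr s) := by
            rw [mul_assoc]
    calc (MulAut.conj g⁻¹) (SemidirectProduct.inr τ)
        = g⁻¹ * (g * SemidirectProduct.inr σ * g⁻¹) * g := by
          rw [key, MulAut.conj_apply, inv_inv]
      _ = SemidirectProduct.inr σ := by group
end

section
/- For n ≥ 4, let α = (1 2 3 ... n) ∈ O_1. Then α^{(1 3 2)} ∈ O_1, α^{(1 2 3)} ∈ O_{n-2}, α⁻¹ ∈ O_{n-1}, (α⁻¹)^{(1 3 2)} ∈ O_{n-1}, and (α⁻¹)^{(1 2 3)} ∈ O_2. -/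
open Fin.NatCast Fin.CommRing

private lemma pow_finRotate_apply (m k : ℕ) (i : Fin (m+1)) :
    ((finRotate (m+1)) ^ k) i = i + (k : Fin (m+1)) := by
  induction k generalizing i with
  | zero => simp
  | succ k ih =>
    rw [pow_succ', Equiv.Perm.mul_apply, finRotate_succ_apply, ih, Nat.cast_add, Nat.cast_one]
    ring


/-- `Oset n k` is the set `O_k = {β an n-cycle in S_n : β^k maps 1 to 2}`,
with the points `1, 2` of `{1,...,n}` modelled as `0, 1 : Fin n`. -/
def Oset (n k : ℕ) [NeZero n] : Set (Equiv.Perm (Fin n)) :=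
  {β : Equiv.Perm (Fin n) | β.IsCycle ∧ β.support = Finset.univ ∧ (β ^ k) 0 = 1}

/-- For `n ≥ 4`, let `α = (1 2 3 ... n) ∈ O_1` (modelled as `finRotate n`).  Then
`α^{(1 3 2)} ∈ O_1`, `α^{(1 2 3)} ∈ O_{n-2}`, `α⁻¹ ∈ O_{n-1}`, `(α⁻¹)^{(1 3 2)} ∈ O_{n-1}`,
and `(α⁻¹)^{(1 2 3)} ∈ O_2`.  Here conjugation `β^σ` relabels the entries of the cycle `β`
by `σ`; with `c₁₂₃` denoting the 3-cycle `(1 2 3)` (i.e. `(0 1 2)` on `Fin n`) and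
`c₁₃₂ = c₁₂₃⁻¹`, the conjugate `β^{(1 2 3)}` is `c₁₂₃ * β * c₁₂₃⁻¹`. -/
theorem conjugates_of_standard_cycle (n : ℕ) [NeZero n] (hn : 4 ≤ n) :
    let α : Equiv.Perm (Fin n) := finRotate n
    let c123 : Equiv.Perm (Fin n) := Equiv.swap 0 1 * Equiv.swap 1 2
    let c132 : Equiv.Perm (Fin n) := c123⁻¹
    α ∈ Oset n 1 ∧
    c132 * α * c132⁻¹ ∈ Oset n 1 ∧
    c123 * α * c123⁻¹ ∈ Oset n (n - 2) ∧
    α⁻¹ ∈ Oset n (n - 1) ∧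
    c132 * α⁻¹ * c132⁻¹ ∈ Oset n (n - 1) ∧
    c123 * α⁻¹ * c123⁻¹ ∈ Oset n 2 := by
  intro α c123 c132
  obtain ⟨m, rfl⟩ : ∃ m, n = m + 4 := ⟨n - 4, by omega⟩
  have h01 : (0 : Fin (m+4)) ≠ 1 := by simp [Fin.ext_iff]
  have h12 : (1 : Fin (m+4)) ≠ 2 := by simp [Fin.ext_iff, Nat.mod_eq_of_lt (show 2 < m+4 by omega)]
  have h02 : (0 : Fin (m+4)) ≠ 2 := by simp [Fin.ext_iff, Nat.mod_eq_of_lt (show 2 < m+4 by omega)]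
  -- values of c123 and c132
  have hc0 : c123 0 = 1 := by
    show (Equiv.swap 0 1 * Equiv.swap 1 2 : Equiv.Perm (Fin (m+4))) 0 = 1
    rw [Equiv.Perm.mul_apply, Equiv.swap_apply_of_ne_of_ne h01 h02, Equiv.swap_apply_left]
  have hc1 : c123 1 = 2 := by
    show (Equiv.swap 0 1 * Equiv.swap 1 2 : Equiv.Perm (Fin (m+4))) 1 = 2
    rw [Equiv.Perm.mul_apply, Equiv.swap_apply_left,
      Equiv.swap_apply_of_ne_of_ne h02.symm h12.symm]
  have hc2 : c123 2 = 0 := by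
    show (Equiv.swap 0 1 * Equiv.swap 1 2 : Equiv.Perm (Fin (m+4))) 2 = 0
    rw [Equiv.Perm.mul_apply, Equiv.swap_apply_right, Equiv.swap_apply_right]
  have hd0 : c132 0 = 2 := by
    show c123⁻¹ 0 = 2; rw [← hc2]; exact Equiv.symm_apply_apply _ _
  have hd2 : c132 2 = 1 := by
    show c123⁻¹ 2 = 1; rw [← hc1]; exact Equiv.symm_apply_apply _ _
  have hpow : ∀ (k : ℕ) (i : Fin (m+4)), (α ^ k) i = i + (k : Fin (m+4)) := fun k i =>
    pow_finRotate_apply (m+3) k i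
  have hinvpow : ∀ (k : ℕ) (i : Fin (m+4)), ((α⁻¹) ^ k) i = i - (k : Fin (m+4)) := by
    intro k i
    rw [inv_pow]
    have h1 := hpow k ((α ^ k)⁻¹ i)
    rw [show (α ^ k) ((α ^ k)⁻¹ i) = i from Equiv.apply_symm_apply _ _] at h1
    rw [eq_sub_iff_add_eq, ← h1]
  -- cycle and support facts
  have hcyc : α.IsCycle := isCycle_finRotate_of_le (by omega)
  have hsup : α.support = Finset.univ := support_finRotate_of_le (by omega)
  have hicyc : α⁻¹.IsCycle := hcyc.inv
  have hisup : α⁻¹.support = Finset.univ := by rw [Equiv.Perm.support_inv, hsup]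
  have hconjsup : ∀ (σ β : Equiv.Perm (Fin (m+4))), β.support = Finset.univ →
      (σ * β * σ⁻¹).support = Finset.univ := by
    intro σ β h
    rw [Equiv.Perm.support_conj, h]
    exact Finset.map_univ_equiv σ
  have hconjpow : ∀ (σ β : Equiv.Perm (Fin (m+4))) (k : ℕ) (x : Fin (m+4)),
      ((σ * β * σ⁻¹) ^ k) x = σ ((β ^ k) (σ⁻¹ x)) := by
    intro σ β k x
    rw [conj_pow]
    rfl
  have hfull : ((m+4 : ℕ) : Fin (m+4)) = 0 := Fin.natCast_self _
  have hval2 : (2 : Fin (m+4)) + ((m+2 : ℕ) : Fin (m+4)) = 0 := by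
    rw [← hfull]; push_cast; ring
  have hval3 : (1 : Fin (m+4)) + ((m+3 : ℕ) : Fin (m+4)) = 0 := by
    rw [← hfull]; push_cast; ring
  have hval4 : (2 : Fin (m+4)) + ((m+3 : ℕ) : Fin (m+4)) = 1 := by
    have : (2 : Fin (m+4)) + ((m+3 : ℕ) : Fin (m+4)) = ((m+4 : ℕ) : Fin (m+4)) + 1 := by
      push_cast; ring
    rw [this, hfull, zero_add]
  have e132 : c132⁻¹ = c123 := inv_inv _
  have hsub : m + 4 - 2 = m + 2 := by omega
  have hsub1 : m + 4 - 1 = m + 3 := by omega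
  refine ⟨⟨hcyc, hsup, ?_⟩, ⟨hcyc.conj, hconjsup _ _ hsup, ?_⟩, ⟨hcyc.conj, hconjsup _ _ hsup, ?_⟩,
    ⟨hicyc, hisup, ?_⟩, ⟨hicyc.conj, hconjsup _ _ hisup, ?_⟩, ⟨hicyc.conj, hconjsup _ _ hisup, ?_⟩⟩
  · rw [hpow]; simp
  · rw [hconjpow, e132, hc0, hpow]
    have : (1 : Fin (m+4)) + ((1:ℕ) : Fin (m+4)) = 2 := by push_cast; ring
    rw [this, hd2]
  · rw [hsub, hconjpow, hpow]
    have : c123⁻¹ 0 = 2 := hd0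
    rw [this, hval2, hc0]
  · rw [hsub1, hinvpow, zero_sub]
    exact neg_eq_of_add_eq_zero_left hval3
  · rw [hsub1, hconjpow, e132, hc0, hinvpow]
    have : (1 : Fin (m+4)) - ((m+3 : ℕ) : Fin (m+4)) = 2 := sub_eq_iff_eq_add.mpr hval4.symm
    rw [this, hd2]
  · rw [hconjpow, hinvpow]
    have h1 : c123⁻¹ 0 = 2 := hd0
    have h2 : (2 : Fin (m+4)) - ((2:ℕ) : Fin (m+4)) = 0 := by push_cast; ring
    rw [h1, h2, hc0]
end
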